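/- Let A be a gauge field on the cube B such that dA(p) = 0 for every plaquette p contained in B and (τA)(x) = 0 for every x ∈ B. Then A(b) = 0 for every bond b in B. -/

import Mathlib

open Finset

noncomputable section

/-- Points of the lattice `ℤ³`. -/
abbrev Pt : Type := Fin 3 → ℤ

/-- The standard unit vector `e_μ`. -/
def unitVec (μ : Fin 3) : Pt := fun i => if i = μ then 1 else 0

/-- Membership in the cube `B = {x : |x i| ≤ (L-1)/2}` (for odd `L`). -/
def inCube (L : ℤ) (x : Pt) : Prop := ∀ i, |x i| ≤ (L - 1) / 2

/-- Shift a point by `k` steps in direction `μ`. -/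
def shiftPt (z : Pt) (μ : Fin 3) (k : ℤ) : Pt := fun i => if i = μ then z i + k else z i

/-- The sum of the gauge field `A` along the straight lattice path from `z` to `z + t·e_μ`. -/
def seg (A : Pt → Pt → ℝ) (z : Pt) (μ : Fin 3) (t : ℤ) : ℝ :=
  if 0 ≤ t then ∑ j ∈ Finset.range t.toNat, A (shiftPt z μ (j : ℤ)) (shiftPt z μ ((j : ℤ) + 1))
  else ∑ j ∈ Finset.range (-t).toNat, A (shiftPt z μ (-(j : ℤ))) (shiftPt z μ (-(j : ℤ) - 1))

/-- The field strength `dA` on the plaquette based at `x`, spanned by `e_μ, e_ν`. -/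
def plaq (A : Pt → Pt → ℝ) (x : Pt) (μ ν : Fin 3) : ℝ :=
  A x (x + unitVec μ) + A (x + unitVec μ) (x + unitVec μ + unitVec ν)
    + A (x + unitVec μ + unitVec ν) (x + unitVec ν) + A (x + unitVec ν) x

/-- The corner of the rectilinear path `Γ^π_{yx}` reached after the first `m` coordinate
moves: coordinates `π 0, …, π (m-1)` are already at their final values. -/
def interPt (y x : Pt) (π : Equiv.Perm (Fin 3)) (m : ℕ) : Pt :=
  fun i => if ((π.symm i : Fin 3) : ℕ) < m then x i else y i

/-- `A(Γ^π_{yx})`: the sum of `A` along the rectilinear path from `y` to `x` which moves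
the coordinates to their final values in the order `π 0, π 1, π 2`. -/
def gammaSum (A : Pt → Pt → ℝ) (π : Equiv.Perm (Fin 3)) (y x : Pt) : ℝ :=
  ∑ m : Fin 3, seg A (interPt y x π (m : ℕ)) (π m) (x (π m) - y (π m))

/-- `(τ⁰A)(x) = A(Γ_{0x})`, for the identity ordering of coordinates. -/
def tau0 (A : Pt → Pt → ℝ) (x : Pt) : ℝ := gammaSum A 1 0 x

/-- `(τA)(x) = (1/6) Σ_π A(Γ^π_{0x})`, averaged over the `3! = 6` permutations. -/
def tau (A : Pt → Pt → ℝ) (x : Pt) : ℝ :=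
  (1 / 6) * ∑ π : Equiv.Perm (Fin 3), gammaSum A π 0 x

/-! A flat field on the cube is a lattice gradient: `A(x, x + e_μ) = φ(x + e_μ) - φ(x)` with
`φ = τ⁰A`. This is built one coordinate at a time, and flatness enters through discrete Stokes on
the strip swept by a straight segment moved one step sideways. Every path sum from `0` to `x` is then
`φ x - φ 0`, so `τA = φ - φ 0`; hence `τA = 0` makes `φ` constant on the cube, and `A` vanishes. -/

open Function

theorem Int.apply_eq_apply_zero_of_succ {α : Type*} (f : ℤ → α) (t : ℤ)
    (h : ∀ s, s ∈ Set.uIcc 0 t → s + 1 ∈ Set.uIcc 0 t → f (s + 1) = f s) : f t = f 0 := by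
  simp only [Set.mem_uIcc] at h
  rcases le_total 0 t with ht | ht
  · induction t, ht using Int.leInduction with
    | base => rfl
    | succ n hn ih =>
      rw [h n (by omega) (by omega), ih fun s hs hs1 => h s (by omega) (by omega)]
  · induction t, ht using Int.leInductionDown with
    | base => rfl
    | pred n hn ih =>
      rw [← ih fun s hs hs1 => h s (by omega) (by omega), ← h (n - 1) (by omega) (by omega),
        sub_add_cancel]

def IsFlatOnCube (A : Pt → Pt → ℝ) (L : ℤ) : Prop :=
  ∀ (x : Pt) (μ ν : Fin 3), μ ≠ ν →
    inCube L x → inCube L (x + unitVec μ) → inCube L (x + unitVec ν) →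
    inCube L (x + unitVec μ + unitVec ν) → plaq A x μ ν = 0

def IsPotentialOn (A : Pt → Pt → ℝ) (φ : Pt → ℝ) (S : Set Pt) : Prop :=
  ∀ x μ, x ∈ S → x + unitVec μ ∈ S → A x (x + unitVec μ) = φ (x + unitVec μ) - φ x

def slab (L : ℤ) (I : Finset (Fin 3)) : Set Pt := {x | inCube L x ∧ ∀ i ∈ I, x i = 0}

def extendAlong (A : Pt → Pt → ℝ) (κ : Fin 3) (ψ : Pt → ℝ) (x : Pt) : ℝ :=
  ψ (update x κ 0) + seg A (update x κ 0) κ (x κ)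

section Points

lemma shiftPt_eq (z : Pt) (μ : Fin 3) (t : ℤ) : shiftPt z μ t = z + t • unitVec μ := by
  funext i; by_cases h : i = μ <;> simp [shiftPt, unitVec, h]

lemma shiftPt_zero (z : Pt) (μ : Fin 3) : shiftPt z μ 0 = z := by
  simp [shiftPt_eq]

lemma shiftPt_add_one (z : Pt) (μ : Fin 3) (t : ℤ) :
    shiftPt z μ (t + 1) = shiftPt z μ t + unitVec μ := by
  simp [shiftPt_eq, add_smul, add_assoc]

lemma shiftPt_add (z w : Pt) (μ : Fin 3) (t : ℤ) :
    shiftPt (z + w) μ t = shiftPt z μ t + w := by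
  simp only [shiftPt_eq]; abel

lemma unitVec_self (μ : Fin 3) : unitVec μ μ = 1 := by simp [unitVec]

lemma unitVec_of_ne {μ κ : Fin 3} (h : μ ≠ κ) : unitVec μ κ = 0 := by simp [unitVec, h.symm]

lemma update_add_unitVec_self (x : Pt) (κ : Fin 3) (c : ℤ) :
    update (x + unitVec κ) κ c = update x κ c := by
  funext i; rcases eq_or_ne i κ with rfl | h <;> simp [unitVec, *]

lemma update_add_unitVec_of_ne (x : Pt) {μ κ : Fin 3} (h : μ ≠ κ) (c : ℤ) :
    update (x + unitVec μ) κ c = update x κ c + unitVec μ := by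
  funext i; rcases eq_or_ne i κ with rfl | h' <;> simp [unitVec, h.symm, *]

lemma shiftPt_update_zero (x : Pt) (κ : Fin 3) : shiftPt (update x κ 0) κ (x κ) = x := by
  funext i; rcases eq_or_ne i κ with rfl | h <;> simp [shiftPt, *]

lemma interPt_zero (y x : Pt) (π : Equiv.Perm (Fin 3)) : interPt y x π 0 = y := by
  funext i; simp [interPt]

lemma interPt_three (y x : Pt) (π : Equiv.Perm (Fin 3)) : interPt y x π 3 = x := by
  funext i; simp [interPt]

lemma shiftPt_interPt (y x : Pt) (π : Equiv.Perm (Fin 3)) (m : Fin 3) :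
    shiftPt (interPt y x π m) (π m) (x (π m) - y (π m)) = interPt y x π (m + 1) := by
  funext i
  rcases eq_or_ne i (π m) with rfl | h
  · simp [shiftPt, interPt]
  · have hm : (π.symm i : ℕ) ≠ m := fun hc => h (by rw [← Fin.ext hc, Equiv.apply_symm_apply])
    simp only [shiftPt, interPt, if_neg h]
    congr 1
    exact propext (by omega)

end Points

section Cube

variable {L : ℤ}

lemma inCube_of_forall_eq_or_eq {x y z : Pt} (hx : inCube L x) (hy : inCube L y)
    (hz : ∀ i, z i = x i ∨ z i = y i) : inCube L z := fun i => by
  rcases hz i with h | h <;> rw [h]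
  exacts [hx i, hy i]

lemma inCube_zero_of_inCube {x : Pt} (hx : inCube L x) : inCube L 0 := fun i => by
  simpa using (abs_nonneg (x i)).trans (hx i)

lemma inCube_shiftPt_of_mem_uIcc {z : Pt} {μ : Fin 3} {t s : ℤ} (hz : inCube L z)
    (ht : inCube L (shiftPt z μ t)) (hs : s ∈ Set.uIcc 0 t) : inCube L (shiftPt z μ s) := by
  intro i
  rcases eq_or_ne i μ with rfl | h
  · have hzi := abs_le.1 (hz i)
    have hti := abs_le.1 (ht i)
    simp only [shiftPt, ↓reduceIte] at hti ⊢
    rw [Set.mem_uIcc] at hs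
    rw [abs_le]; omega
  · simpa [shiftPt, h] using hz i

lemma inCube_interPt {y x : Pt} (hy : inCube L y) (hx : inCube L x)
    (π : Equiv.Perm (Fin 3)) (m : ℕ) : inCube L (interPt y x π m) :=
  inCube_of_forall_eq_or_eq hx hy fun i => by unfold interPt; split_ifs <;> simp

lemma update_zero_mem_slab {x : Pt} {I : Finset (Fin 3)} (hx : x ∈ slab L I) (κ : Fin 3) :
    update x κ 0 ∈ slab L (insert κ I) := by
  refine ⟨inCube_of_forall_eq_or_eq hx.1 (inCube_zero_of_inCube hx.1) fun i => ?_, ?_⟩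
  · rcases eq_or_ne i κ with rfl | h <;> simp [*]
  · intro i hi
    rcases eq_or_ne i κ with rfl | h
    · simp
    · simpa [h] using hx.2 i (by simpa [h] using hi)

end Cube

section Segments

variable {A : Pt → Pt → ℝ} {L : ℤ}

lemma seg_zero (z : Pt) (μ : Fin 3) : seg A z μ 0 = 0 := by
  simp [seg]

lemma seg_natCast (z : Pt) (μ : Fin 3) (n : ℕ) :
    seg A z μ n = ∑ j ∈ range n, A (shiftPt z μ j) (shiftPt z μ (j + 1)) := by
  simp [seg]

lemma seg_neg_natCast (z : Pt) (μ : Fin 3) (n : ℕ) :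
    seg A z μ (-n) = ∑ j ∈ range n, A (shiftPt z μ (-j)) (shiftPt z μ (-j - 1)) := by
  rcases n.eq_zero_or_pos with rfl | hn
  · simp [seg]
  · simp [seg, hn.ne']

lemma seg_add_one (hA : ∀ x x', A x x' = - A x' x) (z : Pt) (μ : Fin 3) (t : ℤ) :
    seg A z μ (t + 1) = seg A z μ t + A (shiftPt z μ t) (shiftPt z μ (t + 1)) := by
  rcases t with n | n
  · simp only [Int.ofNat_eq_natCast, ← Nat.cast_add_one, seg_natCast, sum_range_succ]
  · have ht : Int.negSucc n = -((n + 1 : ℕ) : ℤ) := rfl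
    have ht1 : Int.negSucc n + 1 = -(n : ℤ) := by omega
    rw [ht1, ht, seg_neg_natCast, seg_neg_natCast, sum_range_succ, hA]
    push_cast
    ring_nf

/-- Discrete Stokes on the strip swept by the segment from `z` to `shiftPt z μ t`. -/
lemma seg_add_unitVec (hA : ∀ x x', A x x' = - A x' x) (hdA : IsFlatOnCube A L)
    {μ ν : Fin 3} (hμν : μ ≠ ν) {z : Pt} {t : ℤ}
    (hz : inCube L z) (hzν : inCube L (z + unitVec ν)) (ht : inCube L (shiftPt z μ t))
    (htν : inCube L (shiftPt z μ t + unitVec ν)) :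
    seg A (z + unitVec ν) μ t =
      seg A z μ t - A z (z + unitVec ν) + A (shiftPt z μ t) (shiftPt z μ t + unitVec ν) := by
  have hline : ∀ s ∈ Set.uIcc 0 t, inCube L (shiftPt z μ s) := fun s hs =>
    inCube_shiftPt_of_mem_uIcc hz ht hs
  have hline' : ∀ s ∈ Set.uIcc 0 t, inCube L (shiftPt z μ s + unitVec ν) := fun s hs => by
    rw [← shiftPt_add] at htν ⊢
    exact inCube_shiftPt_of_mem_uIcc hzν htν hs
  have key := Int.apply_eq_apply_zero_of_succ (fun s => seg A (z + unitVec ν) μ s - seg A z μ s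
    - A (shiftPt z μ s) (shiftPt z μ s + unitVec ν)) t fun s hs hs1 => by
      have hp := hdA (shiftPt z μ s) μ ν hμν (hline s hs) (shiftPt_add_one z μ s ▸ hline _ hs1)
        (hline' s hs) (shiftPt_add_one z μ s ▸ hline' _ hs1)
      simp only [seg_add_one hA, shiftPt_add, shiftPt_add_one]
      rw [plaq] at hp
      rw [add_right_comm _ (unitVec ν)]
      linarith [hA (shiftPt z μ s) (shiftPt z μ s + unitVec ν),
        hA (shiftPt z μ s + unitVec ν) (shiftPt z μ s + unitVec μ + unitVec ν)]
  simp only [seg_zero, shiftPt_zero] at key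
  linarith

end Segments

section Potential

variable {A : Pt → Pt → ℝ} {L : ℤ} {φ : Pt → ℝ}

lemma IsPotentialOn.seg_eq_sub (hA : ∀ x x', A x x' = - A x' x)
    (hφ : IsPotentialOn A φ {x | inCube L x}) {z : Pt} {μ : Fin 3} {t : ℤ} (hz : inCube L z)
    (ht : inCube L (shiftPt z μ t)) : seg A z μ t = φ (shiftPt z μ t) - φ z := by
  have key := Int.apply_eq_apply_zero_of_succ (fun s => seg A z μ s - φ (shiftPt z μ s)) t
    fun s hs hs1 => by
      have hs1' := inCube_shiftPt_of_mem_uIcc hz ht hs1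
      rw [shiftPt_add_one] at hs1' ⊢
      rw [seg_add_one hA, shiftPt_add_one, hφ _ μ (inCube_shiftPt_of_mem_uIcc hz ht hs) hs1']
      ring
  simp only [seg_zero, shiftPt_zero] at key
  linarith

lemma IsPotentialOn.gammaSum_eq_sub (hA : ∀ x x', A x x' = - A x' x)
    (hφ : IsPotentialOn A φ {x | inCube L x}) (π : Equiv.Perm (Fin 3)) {y x : Pt}
    (hy : inCube L y) (hx : inCube L x) : gammaSum A π y x = φ x - φ y := by
  have step (m : Fin 3) : seg A (interPt y x π m) (π m) (x (π m) - y (π m)) =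
      φ (interPt y x π (m + 1)) - φ (interPt y x π m) := by
    rw [hφ.seg_eq_sub hA (inCube_interPt hy hx π m)
      (by rw [shiftPt_interPt]; exact inCube_interPt hy hx π _), shiftPt_interPt]
  simp only [gammaSum, Fin.sum_univ_three, step]
  simp [interPt_zero, interPt_three]

lemma IsPotentialOn.tau_eq_sub (hA : ∀ x x', A x x' = - A x' x)
    (hφ : IsPotentialOn A φ {x | inCube L x}) {x : Pt} (hx : inCube L x) :
    tau A x = φ x - φ 0 := by
  simp only [tau, hφ.gammaSum_eq_sub hA _ (inCube_zero_of_inCube hx) hx, sum_const, card_univ,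
    Fintype.card_perm, Fintype.card_fin, nsmul_eq_mul]
  ring

lemma isPotentialOn_slab_univ (ψ : Pt → ℝ) : IsPotentialOn A ψ (slab L univ) := by
  rintro x μ ⟨-, hx⟩ ⟨-, hxμ⟩
  have := hxμ μ (mem_univ μ)
  simp [hx μ (mem_univ μ), unitVec_self] at this

lemma IsPotentialOn.extendAlong (hA : ∀ x x', A x x' = - A x' x) (hdA : IsFlatOnCube A L)
    {ψ : Pt → ℝ} {κ : Fin 3} {I : Finset (Fin 3)} (hψ : IsPotentialOn A ψ (slab L (insert κ I))) :
    IsPotentialOn A (extendAlong A κ ψ) (slab L I) := by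
  intro x μ hx hxμ
  have hu := update_zero_mem_slab hx κ
  have hback := shiftPt_update_zero x κ
  rcases eq_or_ne μ κ with rfl | hμκ
  · simp only [_root_.extendAlong, update_add_unitVec_self, Pi.add_apply, unitVec_self,
      seg_add_one hA, shiftPt_add_one, hback]
    ring
  · have hu' := update_zero_mem_slab hxμ κ
    rw [update_add_unitVec_of_ne x hμκ] at hu'
    have hstrip := seg_add_unitVec hA hdA hμκ.symm hu.1 hu'.1 (by rw [hback]; exact hx.1)
      (by rw [hback]; exact hxμ.1)
    rw [hback] at hstrip
    simp only [_root_.extendAlong, update_add_unitVec_of_ne x hμκ, Pi.add_apply,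
      unitVec_of_ne hμκ, add_zero, hstrip, hψ _ μ hu hu']
    ring

lemma tau0_eq_extendAlong :
    tau0 A = extendAlong A 2 (extendAlong A 1 (extendAlong A 0 0)) := by
  funext x
  have h1 : update (update (update x 2 0) 1 0) 0 0 = 0 := by
    funext i; fin_cases i <;> simp
  have h2 : interPt 0 x 1 1 = update (update x 2 0) 1 0 := by
    funext i; fin_cases i <;> simp [interPt, Equiv.Perm.one_def]
  have h3 : interPt 0 x 1 2 = update x 2 0 := by
    funext i; fin_cases i <;> simp [interPt, Equiv.Perm.one_def]
  simp [tau0, gammaSum, Fin.sum_univ_three, _root_.extendAlong, h1, h2, h3, interPt_zero]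

lemma isPotentialOn_tau0 (hA : ∀ x x', A x x' = - A x' x) (hdA : IsFlatOnCube A L) :
    IsPotentialOn A (tau0 A) {x | inCube L x} := by
  have hcube : slab L ∅ = {x | inCube L x} := by simp [slab]
  have huniv : (insert 0 (insert 1 (insert 2 ∅)) : Finset (Fin 3)) = univ := by decide
  rw [← hcube, tau0_eq_extendAlong]
  refine .extendAlong hA hdA <| .extendAlong hA hdA <| .extendAlong hA hdA ?_
  rw [huniv]
  exact isPotentialOn_slab_univ 0

end Potential

theorem covariant_axial_gauge_rigidity_general (L : ℤ)
    (A : Pt → Pt → ℝ) (hA : ∀ x x', A x x' = - A x' x)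
    (hdA : ∀ (x : Pt) (μ ν : Fin 3), μ ≠ ν →
      inCube L x → inCube L (x + unitVec μ) → inCube L (x + unitVec ν) →
      inCube L (x + unitVec μ + unitVec ν) → plaq A x μ ν = 0)
    (htau : ∀ x : Pt, inCube L x → tau A x = 0) :
    ∀ (x : Pt) (μ : Fin 3), inCube L x → inCube L (x + unitVec μ) →
      A x (x + unitVec μ) = 0 := by
  intro x μ hx hxμ
  have hφ := isPotentialOn_tau0 hA hdA
  rw [hφ x μ hx hxμ]
  linarith [hφ.tau_eq_sub hA hx, hφ.tau_eq_sub hA hxμ, htau x hx, htau _ hxμ]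

/-- If a gauge field `A` on the cube `B` has vanishing field strength on
every plaquette contained in `B` and `(τA)(x) = 0` for every `x ∈ B`, then `A` vanishes
on every bond of `B`. -/
theorem covariant_axial_gauge_rigidity (L : ℤ) (hL3 : 3 ≤ L) (hLodd : Odd L)
    (A : Pt → Pt → ℝ) (hA : ∀ x x', A x x' = - A x' x)
    (hdA : ∀ (x : Pt) (μ ν : Fin 3), μ ≠ ν →
      inCube L x → inCube L (x + unitVec μ) → inCube L (x + unitVec ν) →
      inCube L (x + unitVec μ + unitVec ν) → plaq A x μ ν = 0)
    (htau : ∀ x : Pt, inCube L x → tau A x = 0) :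
    ∀ (x : Pt) (μ : Fin 3), inCube L x → inCube L (x + unitVec μ) →
      A x (x + unitVec μ) = 0 :=
  covariant_axial_gauge_rigidity_general L A hA hdA htau
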